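/- Let G = (V,E) be a finite simple graph, let X ⊆ V, and let Z ⊆ V∖X be a clique of G (every two distinct vertices of Z are adjacent) such that, for some fixed set X'' ⊆ X, every vertex z ∈ Z satisfies N(z)∖Z = X'', where N(z) denotes the open neighbourhood of z in G. Let S ⊆ V, put X' = S ∩ X and p = |S ∩ Z|. Then the number of edges of G that have exactly one endpoint in S and have at least one endpoint in Z equals p·(|Z|−p) + p·|X''∖X'| + (|Z|−p)·|X''∩X'|. -/
import Mathlib

lemma ncard_sprod' {α β : Type*} (s : Set α) (t : Set β) :
    (s ×ˢ t).ncard = s.ncard * t.ncard := by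
  rw [← Nat.card_coe_set_eq, Nat.card_congr (Equiv.Set.prod s t), Nat.card_prod,
    Nat.card_coe_set_eq, Nat.card_coe_set_eq]

theorem stmt10 {V : Type*} [Fintype V] (G : SimpleGraph V)
    (X Z : Set V) (hZ : Z ⊆ Xᶜ) (hclique : G.IsClique Z)
    (X'' : Set V) (hX''sub : X'' ⊆ X)
    (hnbr : ∀ z ∈ Z, G.neighborSet z \ Z = X'')
    (S : Set V) (X' : Set V) (hX' : X' = S ∩ X) (p : ℕ) (hp : p = (S ∩ Z).ncard) :
    {e | e ∈ G.edgeSet ∧ (∃ u ∈ S, ∃ v, v ∉ S ∧ e = s(u, v)) ∧ ∃ w ∈ Z, w ∈ e}.ncard =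
      p * (Z.ncard - p) + p * (X'' \ X').ncard + (Z.ncard - p) * (X'' ∩ X').ncard := by
  classical
  haveI := Fintype.ofFinite V
  -- X'' is disjoint from Z
  have hZX'' : ∀ x, x ∈ X'' → x ∉ Z := fun x hx hxZ => hZ hxZ (hX''sub hx)
  -- X'' \ X' = X'' \ S  and X'' ∩ X' = X'' ∩ S
  have hdiff : X'' \ X' = X'' \ S := by
    ext x; simp only [Set.mem_diff, hX', Set.mem_inter_iff]
    exact ⟨fun ⟨h1, h2⟩ => ⟨h1, fun hs => h2 ⟨hs, hX''sub h1⟩⟩,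
      fun ⟨h1, h2⟩ => ⟨h1, fun hs => h2 hs.1⟩⟩
  have hint : X'' ∩ X' = X'' ∩ S := by
    ext x; simp only [Set.mem_inter_iff, hX']
    exact ⟨fun ⟨h1, h2⟩ => ⟨h1, h2.1⟩, fun ⟨h1, h2⟩ => ⟨h1, h2, hX''sub h1⟩⟩
  -- the ordered-pair set
  set P : Set (V × V) :=
    {uv | G.Adj uv.1 uv.2 ∧ uv.1 ∈ S ∧ uv.2 ∉ S ∧ (uv.1 ∈ Z ∨ uv.2 ∈ Z)} with hP
  have himg : {e | e ∈ G.edgeSet ∧ (∃ u ∈ S, ∃ v, v ∉ S ∧ e = s(u, v)) ∧ ∃ w ∈ Z, w ∈ e}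
      = (fun uv : V × V => s(uv.1, uv.2)) '' P := by
    ext e
    simp only [Set.mem_setOf_eq, Set.mem_image, Prod.exists, hP]
    constructor
    · rintro ⟨he, ⟨u, hu, v, hv, rfl⟩, w, hw, hwmem⟩
      refine ⟨u, v, ⟨?_, hu, hv, ?_⟩, rfl⟩
      · rwa [SimpleGraph.mem_edgeSet] at he
      · rcases Sym2.mem_iff.mp hwmem with h | h
        · left; rwa [← h]
        · right; rwa [← h]
    · rintro ⟨u, v, ⟨hadj, hu, hv, hz⟩, rfl⟩
      refine ⟨hadj, ⟨u, hu, v, hv, rfl⟩, ?_⟩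
      rcases hz with h | h
      · exact ⟨u, h, Sym2.mem_mk_left u v⟩
      · exact ⟨v, h, Sym2.mem_mk_right u v⟩
  have hinj : Set.InjOn (fun uv : V × V => s(uv.1, uv.2)) P := by
    rintro ⟨u, v⟩ ⟨hadj, hu, hv, _⟩ ⟨u', v'⟩ ⟨hadj', hu', hv', _⟩ heq
    simp only [Sym2.eq, Sym2.rel_iff', Prod.mk.injEq, Prod.swap_prod_mk] at heq
    rcases heq with ⟨rfl, rfl⟩ | ⟨rfl, rfl⟩
    · rfl
    · exact absurd hu' hv
  -- decompose P
  have hPdecomp : P = (S ∩ Z) ×ˢ (Z \ S) ∪ (S ∩ Z) ×ˢ (X'' \ S) ∪ (X'' ∩ S) ×ˢ (Z \ S) := by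
    ext ⟨u, v⟩
    simp only [hP, Set.mem_setOf_eq, Set.mem_union, Set.mem_prod, Set.mem_inter_iff,
      Set.mem_diff]
    constructor
    · rintro ⟨hadj, hu, hv, hz⟩
      by_cases huZ : u ∈ Z <;> by_cases hvZ : v ∈ Z
      · exact Or.inl (Or.inl ⟨⟨hu, huZ⟩, hvZ, hv⟩)
      · have : v ∈ X'' := by
          rw [← hnbr u huZ]; exact ⟨hadj, hvZ⟩
        exact Or.inl (Or.inr ⟨⟨hu, huZ⟩, this, hv⟩)
      · have : u ∈ X'' := by
          rw [← hnbr v hvZ]; exact ⟨hadj.symm, huZ⟩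
        exact Or.inr ⟨⟨this, hu⟩, hvZ, hv⟩
      · rcases hz with h | h
        · exact absurd h huZ
        · exact absurd h hvZ
    · rintro ((⟨⟨hu, huZ⟩, hvZ, hv⟩ | ⟨⟨hu, huZ⟩, hvX, hv⟩) | ⟨⟨huX, hu⟩, hvZ, hv⟩)
      · refine ⟨hclique huZ hvZ ?_, hu, hv, Or.inl huZ⟩
        rintro rfl; exact hv hu
      · have : v ∈ G.neighborSet u \ Z := by rw [hnbr u huZ]; exact hvX
        exact ⟨this.1, hu, hv, Or.inl huZ⟩
      · have : u ∈ G.neighborSet v \ Z := by rw [hnbr v hvZ]; exact huX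
        exact ⟨this.1.symm, hu, hv, Or.inr hvZ⟩
  -- disjointness
  have hd1 : Disjoint ((S ∩ Z) ×ˢ (Z \ S)) ((S ∩ Z) ×ˢ (X'' \ S)) := by
    rw [Set.disjoint_left]
    rintro ⟨u, v⟩ ⟨_, hvZ, _⟩ ⟨_, hvX, _⟩
    exact hZX'' v hvX hvZ
  have hd2 : Disjoint ((S ∩ Z) ×ˢ (Z \ S) ∪ (S ∩ Z) ×ˢ (X'' \ S)) ((X'' ∩ S) ×ˢ (Z \ S)) := by
    rw [Set.disjoint_left]
    rintro ⟨u, v⟩ (⟨⟨_, huZ⟩, _⟩ | ⟨⟨_, huZ⟩, _⟩) ⟨⟨huX, _⟩, _⟩ <;> exact hZX'' u huX huZ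
  have hfin : ∀ s : Set (V × V), s.Finite := fun s => s.toFinite
  rw [himg, Set.ncard_image_of_injOn hinj, hPdecomp,
    Set.ncard_union_eq hd2 (hfin _) (hfin _), Set.ncard_union_eq hd1 (hfin _) (hfin _),
    ncard_sprod', ncard_sprod', ncard_sprod', hdiff, hint]
  have hZcard : (Z \ S).ncard = Z.ncard - p := by
    have := Set.ncard_inter_add_ncard_diff_eq_ncard Z S Z.toFinite
    rw [Set.inter_comm] at this
    omega
  rw [hZcard, ← hp]
  ring
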